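/- Let Γ be a d×d real symmetric matrix with zero diagonal and let A, B, C partition [d] with CM(Γ_{C,C}) invertible. Then rank(CM(Γ_{A∪C, B∪C})) = #C + 1 if and only if the Schur complement −(1/2)Γ_{A,B} − [−(1/2)Γ_{A,C}, 1] · CM(Γ_{C,C})⁻¹ · [−(1/2)Γ_{C,B}; 1ᵀ] is the zero matrix. -/
import Mathlib


open Matrix

/-- The Cayley–Menger bordering of a rectangular matrix `X`:
`[[−X/2, 1],[1ᵀ, 0]]`. -/
noncomputable def CMrect {S T : Type*} [Fintype S] [Fintype T]
    (X : Matrix S T ℝ) : Matrix (S ⊕ Fin 1) (T ⊕ Fin 1) ℝ :=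
  Matrix.fromBlocks ((-(1/2) : ℝ) • X) (Matrix.of fun _ _ => 1)
    (Matrix.of fun _ _ => 1) 0

section Aux

variable {k l m n o : Type*}

/-- Rank is invariant under reindexing (rectangular version). -/
lemma rank_reindex' [Fintype l] [Fintype n] (e₁ : k ≃ m) (e₂ : l ≃ n)
    (M : Matrix k l ℝ) : (Matrix.reindex e₁ e₂ M).rank = M.rank := by
  rw [Matrix.rank, Matrix.rank, Matrix.mulVecLin_reindex, LinearMap.range_comp,
    LinearMap.range_comp, LinearEquiv.range, Submodule.map_top, LinearEquiv.finrank_map_eq]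

/-- A matrix over a field has rank zero iff it is zero. -/
lemma rank_eq_zero_iff' [Fintype l] [Fintype m] [DecidableEq m] (M : Matrix l m ℝ) :
    M.rank = 0 ↔ M = 0 := by
  constructor
  · intro h
    rw [Matrix.rank, Submodule.finrank_eq_zero, LinearMap.range_eq_bot] at h
    ext i j
    have := congrFun (congrFun (congrArg DFunLike.coe h) (Pi.single j 1)) i
    simpa [Matrix.mulVecLin, Matrix.mulVec_single] using this
  · rintro rfl
    simp [Matrix.rank_zero]

/-- A product of submodules is linearly equivalent to the product of the submodules. -/
def prodSubmoduleEquiv {M M' : Type*} [AddCommGroup M] [AddCommGroup M']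
    [Module ℝ M] [Module ℝ M'] (p : Submodule ℝ M) (q : Submodule ℝ M') :
    (p.prod q) ≃ₗ[ℝ] p × q where
  toFun x := (⟨x.1.1, x.2.1⟩, ⟨x.1.2, x.2.2⟩)
  invFun x := ⟨(x.1.1, x.2.1), ⟨x.1.2, x.2.2⟩⟩
  map_add' _ _ := rfl
  map_smul' _ _ := rfl
  left_inv _ := rfl
  right_inv _ := rfl

lemma range_prodMap' {M M₂ M₃ M₄ : Type*} [AddCommGroup M] [AddCommGroup M₂]
    [AddCommGroup M₃] [AddCommGroup M₄] [Module ℝ M] [Module ℝ M₂] [Module ℝ M₃] [Module ℝ M₄]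
    (f : M →ₗ[ℝ] M₂) (g : M₃ →ₗ[ℝ] M₄) :
    LinearMap.range (f.prodMap g) = (LinearMap.range f).prod (LinearMap.range g) := by
  ext ⟨x, y⟩
  simp only [LinearMap.mem_range, Submodule.mem_prod, Prod.ext_iff, LinearMap.prodMap_apply,
    Prod.exists]
  exact ⟨fun ⟨a, b, h⟩ => ⟨⟨a, h.1⟩, ⟨b, h.2⟩⟩, fun ⟨⟨a, ha⟩, ⟨b, hb⟩⟩ => ⟨a, b, ha, hb⟩⟩

/-- Rank of a block-diagonal matrix is the sum of the ranks. -/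
lemma rank_fromBlocks_diag [Fintype l] [Fintype m] [Fintype n] [Fintype o]
    (P : Matrix l m ℝ) (D : Matrix n o ℝ) :
    (Matrix.fromBlocks P 0 0 D).rank = P.rank + D.rank := by
  have key : (Matrix.fromBlocks P 0 0 D).mulVecLin =
      ((LinearEquiv.sumArrowLequivProdArrow l n ℝ ℝ).symm : (l → ℝ) × (n → ℝ) →ₗ[ℝ] _) ∘ₗ
        (P.mulVecLin.prodMap D.mulVecLin) ∘ₗ
        ((LinearEquiv.sumArrowLequivProdArrow m o ℝ ℝ) : (m ⊕ o → ℝ) →ₗ[ℝ] _) := by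
    ext x i
    cases i with
    | inl i =>
        simp [Matrix.fromBlocks_mulVec, LinearEquiv.sumArrowLequivProdArrow,
          Equiv.sumArrowEquivProdArrow]
    | inr i =>
        simp [Matrix.fromBlocks_mulVec, LinearEquiv.sumArrowLequivProdArrow,
          Equiv.sumArrowEquivProdArrow]
  rw [Matrix.rank, key, LinearMap.range_comp, LinearMap.range_comp, LinearEquiv.range,
    Submodule.map_top, LinearEquiv.finrank_map_eq, range_prodMap',
    Matrix.rank, Matrix.rank]
  exact (prodSubmoduleEquiv _ _).finrank_eq.trans (Module.finrank_prod)

end Aux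

/-- for a symmetric zero-diagonal `Γ` and a partition `A, B, C` of `[d]`
with `CM(Γ_{C,C})` invertible, `rank CM(Γ_{A∪C,B∪C}) = #C + 1` iff the Schur complement
`−(1/2)Γ_{A,B} − [−(1/2)Γ_{A,C}, 1]·CM(Γ_{C,C})⁻¹·[−(1/2)Γ_{C,B}; 1ᵀ]` vanishes. -/
theorem rank_CM_eq_iff_schur_eq_zero {d : ℕ} (Γ : Matrix (Fin d) (Fin d) ℝ)
    (hsym : Γ.IsSymm) (hdiag : ∀ i, Γ i i = 0)
    (A B C : Finset (Fin d))
    (hAB : Disjoint A B) (hAC : Disjoint A C) (hBC : Disjoint B C)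
    (hpart : A ∪ B ∪ C = Finset.univ)
    (hinv : IsUnit (CMrect (Γ.submatrix (Subtype.val : C → Fin d)
        (Subtype.val : C → Fin d))).det) :
    (CMrect (Γ.submatrix
        (Sum.elim (Subtype.val : A → Fin d) (Subtype.val : C → Fin d))
        (Sum.elim (Subtype.val : B → Fin d) (Subtype.val : C → Fin d)))).rank
      = C.card + 1 ↔
    ((-(1/2) : ℝ) • Γ.submatrix (Subtype.val : A → Fin d) (Subtype.val : B → Fin d))
      - (Matrix.of fun (a : A) (s : (C : Type _) ⊕ Fin 1) =>
          Sum.elim (fun c : C => -(1/2) * Γ a c) (fun _ => (1 : ℝ)) s)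
        * (CMrect (Γ.submatrix (Subtype.val : C → Fin d) (Subtype.val : C → Fin d)))⁻¹
        * (Matrix.of fun (s : (C : Type _) ⊕ Fin 1) (b : B) =>
            Sum.elim (fun c : C => -(1/2) * Γ c b) (fun _ => (1 : ℝ)) s)
      = 0 := by
  classical
  set D := CMrect (Γ.submatrix (Subtype.val : C → Fin d) (Subtype.val : C → Fin d)) with hDdef
  set P : Matrix A B ℝ :=
    (-(1/2) : ℝ) • Γ.submatrix (Subtype.val : A → Fin d) (Subtype.val : B → Fin d) with hPdef
  set Q : Matrix A ((C : Type _) ⊕ Fin 1) ℝ :=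
    Matrix.of fun (a : A) (s : (C : Type _) ⊕ Fin 1) =>
      Sum.elim (fun c : C => -(1/2) * Γ a c) (fun _ => (1 : ℝ)) s with hQdef
  set R : Matrix ((C : Type _) ⊕ Fin 1) B ℝ :=
    Matrix.of fun (s : (C : Type _) ⊕ Fin 1) (b : B) =>
      Sum.elim (fun c : C => -(1/2) * Γ c b) (fun _ => (1 : ℝ)) s with hRdef
  have : Invertible D := D.invertibleOfIsUnitDet hinv
  -- Step 1: the big CM matrix is a reindexing of `fromBlocks P Q R D`
  have hM : CMrect (Γ.submatrix
        (Sum.elim (Subtype.val : A → Fin d) (Subtype.val : C → Fin d))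
        (Sum.elim (Subtype.val : B → Fin d) (Subtype.val : C → Fin d)))
      = (Matrix.fromBlocks P Q R D).submatrix
          (Equiv.sumAssoc (A : Type _) (C : Type _) (Fin 1))
          (Equiv.sumAssoc (B : Type _) (C : Type _) (Fin 1)) := by
    ext i j
    rcases i with (a | c) | i <;> rcases j with (b | c') | j <;>
      simp [CMrect, hDdef, hPdef, hQdef, hRdef, Equiv.sumAssoc, Matrix.submatrix_apply,
        Matrix.smul_apply, mul_comm]
  have hrank1 : (CMrect (Γ.submatrix
        (Sum.elim (Subtype.val : A → Fin d) (Subtype.val : C → Fin d))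
        (Sum.elim (Subtype.val : B → Fin d) (Subtype.val : C → Fin d)))).rank
      = (Matrix.fromBlocks P Q R D).rank := by
    rw [hM]
    simpa [Matrix.reindex_apply] using
      rank_reindex' (Equiv.sumAssoc (A : Type _) (C : Type _) (Fin 1)).symm
        (Equiv.sumAssoc (B : Type _) (C : Type _) (Fin 1)).symm (Matrix.fromBlocks P Q R D)
  -- Step 2: LDU decomposition and rank computation
  have hdetL : IsUnit (Matrix.fromBlocks (1 : Matrix A A ℝ) (Q * ⅟D) 0 1).det := by
    rw [Matrix.det_fromBlocks_zero₂₁]; simp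
  have hdetR : IsUnit (Matrix.fromBlocks (1 : Matrix B B ℝ) 0 (⅟D * R) 1).det := by
    rw [Matrix.det_fromBlocks_zero₁₂]; simp
  have hrank2 : (Matrix.fromBlocks P Q R D).rank = (P - Q * ⅟D * R).rank + D.rank := by
    rw [Matrix.fromBlocks_eq_of_invertible₂₂ P Q R D,
      Matrix.rank_mul_eq_left_of_isUnit_det _ _ hdetR,
      Matrix.rank_mul_eq_right_of_isUnit_det _ _ hdetL, rank_fromBlocks_diag]
  have hDrank : D.rank = C.card + 1 := by
    rw [Matrix.rank_of_isUnit D ((Matrix.isUnit_iff_isUnit_det D).mpr hinv)]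
    simp [Fintype.card_sum, Fintype.card_coe]
  rw [hrank1, hrank2, Matrix.invOf_eq_nonsing_inv, hDrank,
    ← rank_eq_zero_iff' (P - Q * D⁻¹ * R)]
  omega
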